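/- Let Γ be a ℤ^d-periodic graph with fundamental domain W = [n] and generic Newton polytope N = N(D(z,λ)). If w ∈ ℤ^{d+1} identifies a proper vertical face F ⊊ N (i.e., F = {a ∈ N : w·a = min_{b∈N} w·b} is vertical and F ≠ N), then: (1) w = (w₁,…,w_d,0) with w ≠ (0,…,0), i.e., the last coordinate of w is 0; (2) F does not contain the point (0,…,0); and (3) m := min_{a∈N} w·a < 0. -/

import Mathlib

open scoped Classical Polynomial

noncomputable section

/-- A `ℤ^d`-periodic graph (with no self-loops or multiple edges), given by a
fundamental domain `[n] = Fin n` together with, for each pair `i j` of vertices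
of the fundamental domain, the finite set `edges i j ⊆ ℤ^d` of those `a` such
that there is an edge between the vertex `(i,0)` and the vertex `(j,a)`.
The full vertex set is `Fin n × ℤ^d`, with `ℤ^d` acting by translation on the
second coordinate. -/
structure PeriodicGraph (d n : ℕ) where
  edges : Fin n → Fin n → Finset (Fin d → ℤ)
  symm : ∀ i j a, a ∈ edges i j ↔ -a ∈ edges j i
  no_loop : ∀ i, (0 : Fin d → ℤ) ∉ edges i i

namespace PeriodicGraph

variable {d n : ℕ}

/-- Vertices of the periodic graph: pairs `(i, a)` with `i` in the fundamental
domain and `a ∈ ℤ^d`. -/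
abbrev Vertex (d n : ℕ) := Fin n × (Fin d → ℤ)

/-- Adjacency in the full `ℤ^d`-periodic graph. -/
def Adj (G : PeriodicGraph d n) (u v : Vertex d n) : Prop :=
  (v.2 - u.2) ∈ G.edges u.1 v.1

/-- The periodic graph is connected. -/
def Connected (G : PeriodicGraph d n) : Prop :=
  ∀ u v : Vertex d n, Relation.ReflTransGen G.Adj u v

/-- Directed edges (up to translation): triples `(i, j, a)` so that there is an
edge from `(i,0)` to `(j,a)`. -/
def DirEdge (G : PeriodicGraph d n) : Type :=
  {x : Fin n × Fin n × (Fin d → ℤ) // x.2.2 ∈ G.edges x.1 x.2.1}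

/-- Reversal of a directed edge. -/
def flipEdge (G : PeriodicGraph d n) (x : G.DirEdge) : G.DirEdge :=
  ⟨(x.1.2.1, x.1.1, -x.1.2.2), (G.symm _ _ _).mp x.2⟩

lemma flipEdge_flipEdge (G : PeriodicGraph d n) (x : G.DirEdge) :
    G.flipEdge (G.flipEdge x) = x := by
  obtain ⟨⟨i, j, a⟩, hx⟩ := x
  apply Subtype.ext
  simp [flipEdge]

/-- The setoid identifying a directed edge with its reversal; an (undirected)
edge label variable `e_{(i,j),a} = e_{(j,i),-a}` corresponds to an equivalence
class. -/
def edgeSetoid (G : PeriodicGraph d n) : Setoid G.DirEdge where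
  r x y := y = x ∨ y = G.flipEdge x
  iseqv := by
    constructor
    · intro x; exact Or.inl rfl
    · rintro x y (rfl | rfl)
      · exact Or.inl rfl
      · right; rw [flipEdge_flipEdge]
    · rintro x y z (rfl | rfl) h
      · exact h
      · rcases h with rfl | rfl
        · exact Or.inr rfl
        · left; rw [flipEdge_flipEdge]

/-- Edge-label variables: unordered edges of the quotient graph. -/
abbrev EdgeVar (G : PeriodicGraph d n) : Type := Quotient G.edgeSetoid

/-- The index type for the variables of the labeling space `ℂ^{V,E}`:
one potential variable `v_i` for each vertex `i` of the fundamental domain,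
and one edge-label variable for each (undirected) edge of the quotient. -/
abbrev VarIdx (G : PeriodicGraph d n) : Type := Fin n ⊕ G.EdgeVar

/-- The labeling space `ℂ^{V,E}`. -/
abbrev Labeling (G : PeriodicGraph d n) : Type := G.VarIdx → ℂ

/-- The edge variable attached to a directed edge. -/
def edgeVar (G : PeriodicGraph d n) (i j : Fin n) (a : Fin d → ℤ)
    (h : a ∈ G.edges i j) : G.VarIdx :=
  Sum.inr (Quotient.mk G.edgeSetoid ⟨(i, j, a), h⟩)

/-- The ring `ℂ[z^{±1}]` of complex Laurent polynomials in `z = (z_1,…,z_d)`. -/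
abbrev LaurentC (d : ℕ) : Type := AddMonoidAlgebra ℂ (Fin d → ℤ)

/-- The universal coefficient ring `ℂ[v,e]`: polynomials in the potential and
edge-label variables. -/
abbrev CoeffRing (G : PeriodicGraph d n) : Type := MvPolynomial G.VarIdx ℂ

/-- Laurent polynomials in `z` with coefficients in `ℂ[v,e]`. -/
abbrev LaurentU (G : PeriodicGraph d n) : Type :=
  AddMonoidAlgebra G.CoeffRing (Fin d → ℤ)

/-- The Floquet matrix `L(z)` at a fixed labeling `x ∈ ℂ^{V,E}`:
`L(z)_{i,j} = δ_{ij} v_i + ∑_{a : (i,j+a) ∈ ℰ} e_{(i,j),a} z^a`. -/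
def floquet (G : PeriodicGraph d n) (x : G.Labeling) :
    Matrix (Fin n) (Fin n) (LaurentC d) := fun i j =>
  (if i = j then AddMonoidAlgebra.single 0 (x (Sum.inl i)) else 0) +
    ∑ a ∈ (G.edges i j).attach,
      AddMonoidAlgebra.single a.1 (x (G.edgeVar i j a.1 a.2))

/-- The universal Floquet matrix `L(z)`, with the potentials and edge labels
treated as indeterminates. -/
def floquetU (G : PeriodicGraph d n) :
    Matrix (Fin n) (Fin n) G.LaurentU := fun i j =>
  (if i = j then AddMonoidAlgebra.single 0 (MvPolynomial.X (Sum.inl i)) else 0) +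
    ∑ a ∈ (G.edges i j).attach,
      AddMonoidAlgebra.single a.1 (MvPolynomial.X (G.edgeVar i j a.1 a.2))

/-- The matrix `L(z) - λ I` at a fixed labeling, as a matrix of polynomials in
`λ` over `ℂ[z^{±1}]`. -/
def dispMat (G : PeriodicGraph d n) (x : G.Labeling) :
    Matrix (Fin n) (Fin n) (Polynomial (LaurentC d)) := fun i j =>
  Polynomial.C (G.floquet x i j) - if i = j then Polynomial.X else 0

/-- The universal matrix `L(z) - λ I`. -/
def dispMatU (G : PeriodicGraph d n) :
    Matrix (Fin n) (Fin n) (Polynomial G.LaurentU) := fun i j =>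
  Polynomial.C (G.floquetU i j) - if i = j then Polynomial.X else 0

/-- The dispersion polynomial `D(z,λ) = det (L(z) - λ I)` at a fixed
labeling, an element of `ℂ[z^{±1}][λ]`. -/
def disp (G : PeriodicGraph d n) (x : G.Labeling) : Polynomial (LaurentC d) :=
  (G.dispMat x).det

/-- The universal dispersion polynomial `D(v,e,z,λ) = det (L(z) - λ I)`,
an element of `ℂ[v,e][z^{±1}][λ]`. -/
def dispU (G : PeriodicGraph d n) : Polynomial G.LaurentU :=
  G.dispMatU.det

/-- `σD(z,λ) = ∏ i, (L(z) - λI)_{i, σ(i)}` at a fixed labeling. -/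
def permProd (G : PeriodicGraph d n) (x : G.Labeling) (σ : Equiv.Perm (Fin n)) :
    Polynomial (LaurentC d) :=
  ∏ i, G.dispMat x i (σ i)

/-- The universal `σD(v,e,z,λ) = ∏ i, (L(z) - λI)_{i, σ(i)}`. -/
def permProdU (G : PeriodicGraph d n) (σ : Equiv.Perm (Fin n)) :
    Polynomial G.LaurentU :=
  ∏ i, G.dispMatU i (σ i)

/-- The support `𝒜(g) ⊆ ℤ^d × ℕ` of `g ∈ ℂ[z^{±1}][λ]`: the set of pairs
`(a, b)` such that the monomial `z^a λ^b` has nonzero coefficient. -/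
def suppC (g : Polynomial (LaurentC d)) : Set ((Fin d → ℤ) × ℕ) :=
  {p | (g.coeff p.2).coeff p.1 ≠ 0}

/-- The generic support `A(f) ⊆ ℤ^d × ℕ` of `f ∈ ℂ[v,e][z^{±1}][λ]`: the set
of `(a,b)` such that the coefficient `c_{a,b}(v,e)` of `z^a λ^b` is a nonzero
polynomial in `(v,e)` (equivalently, such that `(a,b)` is in the support of the
specialization of `f` at a generic labeling). -/
def genSupp {G : PeriodicGraph d n} (f : Polynomial G.LaurentU) :
    Set ((Fin d → ℤ) × ℕ) :=
  {p | (f.coeff p.2).coeff p.1 ≠ 0}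

/-- The full support `𝒜(f) ⊆ ℤ^d × ℕ × ℕ^{V,E}` of `f ∈ ℂ[v,e][z^{±1}][λ]`
as a polynomial in all the variables `z, λ, v, e`: the set of triples
`(r₁, r₂, r₃)` such that the monomial `z^{r₁} λ^{r₂} (v,e)^{r₃}` appears in `f`
with nonzero coefficient. -/
def fullSupp {G : PeriodicGraph d n} (f : Polynomial G.LaurentU) :
    Set ((Fin d → ℤ) × ℕ × (G.VarIdx →₀ ℕ)) :=
  {r | MvPolynomial.coeff r.2.2 ((f.coeff r.2.1).coeff r.1) ≠ 0}

/-- The embedding `ℤ^d × ℕ → ℝ^{d+1}` of exponent vectors. -/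
def toPt (p : (Fin d → ℤ) × ℕ) : (Fin d → ℝ) × ℝ :=
  (fun i => (p.1 i : ℝ), (p.2 : ℝ))

/-- The generic Newton polytope `N(f) ⊆ ℝ^{d+1}` of `f ∈ ℂ[v,e][z^{±1}][λ]`:
the convex hull of the generic support. -/
def newton {G : PeriodicGraph d n} (f : Polynomial G.LaurentU) :
    Set ((Fin d → ℝ) × ℝ) :=
  convexHull ℝ (toPt '' genSupp f)

/-- The pairing `w · p` of a weight `w ∈ ℤ^{d+1}` with an exponent vector
`p ∈ ℤ^d × ℕ`. -/
def dotZ (w : (Fin d → ℤ) × ℤ) (p : (Fin d → ℤ) × ℕ) : ℤ :=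
  (∑ i, w.1 i * p.1 i) + w.2 * (p.2 : ℤ)

/-- The pairing `w · q` of a weight `w ∈ ℤ^{d+1}` with a point `q ∈ ℝ^{d+1}`. -/
def dotR (w : (Fin d → ℤ) × ℤ) (q : (Fin d → ℝ) × ℝ) : ℝ :=
  (∑ i, (w.1 i : ℝ) * q.1 i) + (w.2 : ℝ) * q.2

/-- The face `N(f)_w` of the generic Newton polytope identified by the weight
`w`: the set of points of `N(f)` on which `w · ·` is minimized. -/
def face {G : PeriodicGraph d n} (f : Polynomial G.LaurentU)
    (w : (Fin d → ℤ) × ℤ) : Set ((Fin d → ℝ) × ℝ) :=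
  {q ∈ newton f | ∀ q' ∈ newton f, dotR w q ≤ dotR w q'}

/-- A set in `ℝ^{d+1}` is vertical if it contains two points `(a,b)` and
`(a,c)` with `b ≠ c`. -/
def IsVertical (F : Set ((Fin d → ℝ) × ℝ)) : Prop :=
  ∃ (a : Fin d → ℝ) (b c : ℝ), b ≠ c ∧ (a, b) ∈ F ∧ (a, c) ∈ F

/-- A set in `ℝ^{d+1}` is a vertical segment if it is a (one-dimensional)
segment and is vertical. -/
def IsVerticalSegment (F : Set ((Fin d → ℝ) × ℝ)) : Prop :=
  (∃ p q : (Fin d → ℝ) × ℝ, p ≠ q ∧ F = segment ℝ p q) ∧ IsVertical F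

/-- `U ⊆ [n]` is a component of the fundamental domain: no edge of `Γ` joins
the `ℤ^d`-orbit of `U` to the `ℤ^d`-orbit of its complement. -/
def IsComponent (G : PeriodicGraph d n) (U : Set (Fin n)) : Prop :=
  ∀ i ∈ U, ∀ j, j ∉ U → G.edges i j = ∅

/-- A fundamental domain of `Γ` is determined by shifts `t i ∈ ℤ^d` of the
vertices of the standard fundamental domain (it is `{(i, t i) : i ∈ [n]}`).
`SupportZeroOn G t U` says that the subset `{(i, t i) : i ∈ U}` of that
fundamental domain has support `0`: every edge between the orbits of vertices
of `U` joins `(i, t i)` to `(j, t j)` with shift `a = 0`. -/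
def SupportZeroOn (G : PeriodicGraph d n) (t : Fin n → (Fin d → ℤ))
    (U : Set (Fin n)) : Prop :=
  ∀ i ∈ U, ∀ j ∈ U, ∀ a ∈ G.edges i j, a = t j - t i

/-- `Γ` has a fundamental domain of support `0`. -/
def HasSupportZeroFD (G : PeriodicGraph d n) : Prop :=
  ∃ t : Fin n → (Fin d → ℤ), G.SupportZeroOn t Set.univ

/-- `Γ` has a fundamental domain with a nonempty component of support `0`. -/
def HasSupportZeroComponent (G : PeriodicGraph d n) : Prop :=
  ∃ (t : Fin n → (Fin d → ℤ)) (U : Set (Fin n)),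
    U.Nonempty ∧ G.IsComponent U ∧ G.SupportZeroOn t U

/-- A subset of the labeling space `ℂ^{V,E}` is algebraic if it is the common
zero locus of a family of polynomials in the variables `(v,e)`. -/
def IsAlgebraicSet {ι : Type*} (S : Set (ι → ℂ)) : Prop :=
  ∃ P : Set (MvPolynomial ι ℂ), S = {x | ∀ p ∈ P, MvPolynomial.eval x p = 0}

/-- A property of labelings holds generically if it holds outside some proper
algebraic subset of the labeling space (i.e., on a nonempty Zariski-open set). -/
def Generic {ι : Type*} (P : (ι → ℂ) → Prop) : Prop :=
  ∃ S : Set (ι → ℂ), IsAlgebraicSet S ∧ S ≠ Set.univ ∧ ∀ x ∉ S, P x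

/-- `g ∈ ℂ[z^{±1}][λ]` has a linear factor in `λ`. -/
def HasLinearFactor (g : Polynomial (LaurentC d)) : Prop :=
  ∃ lam : ℂ, (Polynomial.X - Polynomial.C (algebraMap ℂ (LaurentC d) lam)) ∣ g



/-- The dispersion polynomial `D|_U(z,λ) = det (L|_U(z) - λI)` of the induced
periodic operator on the induced subgraph `Γ_U`, for `U ⊆ [n]`, at a fixed
labeling (the Floquet matrix of the induced operator is the corresponding
principal submatrix of `L(z)`). -/
def dispSub (G : PeriodicGraph d n) (x : G.Labeling) (U : Finset (Fin n)) :
    Polynomial (LaurentC d) :=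
  (Matrix.det (fun i j : {i // i ∈ U} =>
    Polynomial.C (G.floquet x i.1 j.1) - if i = j then Polynomial.X else 0))

/-- Restriction of a Laurent polynomial to the monomials satisfying a
predicate. -/
def laurFilter (p : (Fin d → ℤ) → Prop) (g : LaurentC d) : LaurentC d :=
  AddMonoidAlgebra.ofCoeff (Finsupp.filter p (g.coeff : (Fin d → ℤ) →₀ ℂ))

/-- The facial polynomial `g_w` of `g ∈ ℂ[z^{±1}][λ]`: the sum of the terms of
`g` whose exponent vectors minimize `w · ·` over the support of `g`. -/
def facialC (w : (Fin d → ℤ) × ℤ) (g : Polynomial (LaurentC d)) :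
    Polynomial (LaurentC d) :=
  ∑ b ∈ g.support,
    Polynomial.C (laurFilter
      (fun a => ∀ q ∈ suppC g, dotZ w (a, b) ≤ dotZ w q) (g.coeff b)) *
      Polynomial.X ^ b

/-- The monomial `z^a` in `ℂ[z^{±1}]`. -/
def zMon (a : Fin d → ℤ) : LaurentC d := AddMonoidAlgebra.single a 1

/-- The Sylvester matrix of two polynomials `f, g ∈ R[λ]` (with respect to
their natural degrees `s = deg f` and `t = deg g`): a `(t+s) × (t+s)` matrix
whose first `t` rows are the shifted coefficient sequences of `f` and whose
last `s` rows are the shifted coefficient sequences of `g`. -/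
def sylvester {R : Type*} [CommRing R] (f g : Polynomial R) :
    Matrix (Fin (g.natDegree + f.natDegree)) (Fin (g.natDegree + f.natDegree)) R :=
  fun r c =>
    if (r : ℕ) < g.natDegree then
      (if (r : ℕ) ≤ (c : ℕ) then f.coeff ((c : ℕ) - (r : ℕ)) else 0)
    else
      (if ((r : ℕ) - g.natDegree) ≤ (c : ℕ) then
        g.coeff ((c : ℕ) - ((r : ℕ) - g.natDegree)) else 0)

/-- The resultant of two polynomials in `λ`: the determinant of their
Sylvester matrix. -/
def resultant {R : Type*} [CommRing R] (f g : Polynomial R) : R :=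
  (sylvester f g).det

/-- The simplified quotient graph `S(Γ/ℤ^d)`: the finite simple graph on the
fundamental domain `[n]` with an edge between `i ≠ j` whenever some edge of `Γ`
joins the orbits of `i` and `j`. -/
def simpleQuotient (G : PeriodicGraph d n) : SimpleGraph (Fin n) where
  Adj i j := i ≠ j ∧ (G.edges i j).Nonempty
  symm := by
    refine ⟨?_⟩
    rintro i j ⟨hij, a, ha⟩
    exact ⟨hij.symm, ⟨-a, (G.symm i j a).mp ha⟩⟩
  loopless := ⟨fun i h => h.1 rfl⟩

/-- A property of potentials `(v_1,…,v_n) ∈ ℂ^n` holds generically if it holds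
outside a proper algebraic subset of `ℂ^n`. -/
def GenericPot (P : (Fin n → ℂ) → Prop) : Prop :=
  ∃ S : Set (Fin n → ℂ), IsAlgebraicSet S ∧ S ≠ Set.univ ∧ ∀ x ∉ S, P x

end PeriodicGraph

/-!
Since `L(z)ᵀ = L(z⁻¹)`, the dispersion polynomial satisfies `D(z⁻¹, λ) = D(z, λ)`, so `N` is
symmetric under `(a, b) ↦ (-a, b)`. A vertical face forces `w` to be orthogonal to the
`λ`-direction, and then `w · _` is odd under this symmetry: were it nonnegative on `N`, it would
vanish on `N` and the face would be all of `N`. So some point of `N` pairs negatively with `w`,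
which gives `m < 0` and keeps the origin, where the pairing is `0`, out of the face.
-/

namespace PeriodicGraph

variable {d n : ℕ}

section Face

variable {G : PeriodicGraph d n} (f : Polynomial G.LaurentU) (w : (Fin d → ℤ) × ℤ)

lemma dotR_zero_right : dotR w (0, 0) = 0 := by
  simp [dotR]

lemma dotR_neg_fst (hw : w.2 = 0) (q : (Fin d → ℝ) × ℝ) :
    dotR w (-q.1, q.2) = -dotR w q := by
  simp [dotR, hw, Finset.sum_neg_distrib]

lemma face_zero : face f 0 = newton f := by
  ext q
  simp [face, dotR]

lemma face_eq_newton_of_forall_nonneg (hw : w.2 = 0)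
    (hsymm : ∀ q ∈ newton f, (-q.1, q.2) ∈ newton f)
    (hnonneg : ∀ q ∈ newton f, 0 ≤ dotR w q) : face f w = newton f := by
  refine subset_antisymm (fun _ hq => hq.1) fun q hq => ⟨hq, fun q' hq' => ?_⟩
  have hq_nonpos := hnonneg _ (hsymm q hq)
  rw [dotR_neg_fst w hw] at hq_nonpos
  linarith [hnonneg q' hq']

lemma snd_eq_zero_of_isVertical_face (h : IsVertical (face f w)) : w.2 = 0 := by
  obtain ⟨a, b, c, hbc, hb, hc⟩ := h
  have heq : dotR w (a, b) = dotR w (a, c) := le_antisymm (hb.2 _ hc.1) (hc.2 _ hb.1)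
  have hmul : (w.2 : ℝ) * (b - c) = 0 := by
    simp only [dotR] at heq
    linarith
  exact_mod_cast (mul_eq_zero.mp hmul).resolve_right (sub_ne_zero.mpr hbc)

variable {f} in
lemma neg_fst_mem_newton (hf : ∀ b a, (f.coeff b).coeff (-a) = (f.coeff b).coeff a)
    {q : (Fin d → ℝ) × ℝ} (hq : q ∈ newton f) : (-q.1, q.2) ∈ newton f := by
  let T : ((Fin d → ℝ) × ℝ) →ₗ[ℝ] ((Fin d → ℝ) × ℝ) := (-LinearMap.id).prodMap LinearMap.id
  have hT : T '' (toPt '' genSupp f) ⊆ toPt '' genSupp f := by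
    rintro _ ⟨_, ⟨p, hp, rfl⟩, rfl⟩
    refine ⟨(-p.1, p.2), ?_, ?_⟩
    · show (f.coeff p.2).coeff (-p.1) ≠ 0
      rwa [hf]
    · ext <;> simp [toPt, T]
  have hTq : T q ∈ convexHull ℝ (T '' (toPt '' genSupp f)) := by
    rw [← T.image_convexHull]
    exact Set.mem_image_of_mem _ hq
  exact convexHull_mono hT hTq

end Face

def negU (G : PeriodicGraph d n) : G.LaurentU ≃ₐ[ℂ] G.LaurentU :=
  AddMonoidAlgebra.domCongr ℂ G.CoeffRing (AddEquiv.neg (Fin d → ℤ))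

lemma edgeVar_flip (G : PeriodicGraph d n) (i j : Fin n) (a : Fin d → ℤ)
    (h : a ∈ G.edges i j) (h' : -a ∈ G.edges j i) :
    G.edgeVar i j a h = G.edgeVar j i (-a) h' :=
  congrArg Sum.inr (Quotient.sound (Or.inr rfl))

lemma negU_floquetU (G : PeriodicGraph d n) (i j : Fin n) :
    G.negU (G.floquetU i j) = G.floquetU j i := by
  unfold floquetU
  rw [map_add, map_sum]
  congr 1
  · rcases eq_or_ne i j with rfl | hij
    · simp [negU]
    · simp [hij, hij.symm]
  · refine Finset.sum_bij'
      (fun a _ => ⟨-a.1, (G.symm i j a.1).mp a.2⟩)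
      (fun b _ => ⟨-b.1, by simpa using (G.symm j i b.1).mp b.2⟩)
      (fun _ _ => Finset.mem_attach _ _) (fun _ _ => Finset.mem_attach _ _)
      (fun _ _ => by simp) (fun _ _ => by simp) fun a _ => ?_
    rw [edgeVar_flip G i j a.1 a.2 ((G.symm i j a.1).mp a.2)]
    simp [negU]

lemma mapMatrix_dispMatU_negU (G : PeriodicGraph d n) :
    (Polynomial.mapRingHom G.negU.toAlgHom.toRingHom :
      G.LaurentU[X] →+* G.LaurentU[X]).mapMatrix G.dispMatU = G.dispMatU.transpose := by
  ext i j : 2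
  simp only [RingHom.mapMatrix_apply, Matrix.map_apply, Matrix.transpose_apply, dispMatU,
    Polynomial.coe_mapRingHom, Polynomial.map_sub, Polynomial.map_C]
  rw [show G.negU.toAlgHom.toRingHom (G.floquetU i j) = G.floquetU j i from G.negU_floquetU i j]
  rcases eq_or_ne i j with rfl | hij
  · simp
  · simp [hij, hij.symm]

lemma dispU_map_negU (G : PeriodicGraph d n) :
    G.dispU.map G.negU.toAlgHom.toRingHom = G.dispU := by
  rw [dispU, ← Polynomial.coe_mapRingHom]
  refine (RingHom.map_det (S := G.LaurentU[X]) _ G.dispMatU).trans ?_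
  rw [mapMatrix_dispMatU_negU, Matrix.det_transpose]

lemma dispU_coeff_neg (G : PeriodicGraph d n) (b : ℕ) (a : Fin d → ℤ) :
    (G.dispU.coeff b).coeff (-a) = (G.dispU.coeff b).coeff a := by
  conv_rhs => rw [← G.dispU_map_negU]
  simp [Polynomial.coeff_map, negU]

lemma exists_mem_newton_dotR_neg (G : PeriodicGraph d n) {w : (Fin d → ℤ) × ℤ}
    (hw : w.2 = 0) (hproper : face G.dispU w ≠ newton G.dispU) :
    ∃ q ∈ newton G.dispU, dotR w q < 0 := by
  by_contra! hnonneg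
  exact hproper <| face_eq_newton_of_forall_nonneg _ w hw
    (fun _ => neg_fst_mem_newton G.dispU_coeff_neg) hnonneg

end PeriodicGraph

open PeriodicGraph in
/-- If `w ∈ ℤ^{d+1}` identifies a proper vertical face
`F = N_w ⊊ N` of the generic Newton polytope, then (1) `w ≠ 0` and the last
coordinate of `w` is `0`; (2) `F` does not contain the origin; and (3) the
minimum `m = min_{a ∈ N} w·a` is negative. -/
theorem proper_vertical_face_properties {d n : ℕ} (G : PeriodicGraph d n)
    (w : (Fin d → ℤ) × ℤ)
    (hproper : face G.dispU w ≠ newton G.dispU)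
    (hvert : IsVertical (face G.dispU w)) :
    (w ≠ 0 ∧ w.2 = 0) ∧
    ((0 : Fin d → ℝ), (0 : ℝ)) ∉ face G.dispU w ∧
    (∀ m : ℝ, IsLeast (dotR w '' newton G.dispU) m → m < 0) := by
  have hw2 : w.2 = 0 := snd_eq_zero_of_isVertical_face _ w hvert
  have hw : w ≠ 0 := by
    rintro rfl
    exact hproper (face_zero _)
  obtain ⟨q, hq, hq_neg⟩ := G.exists_mem_newton_dotR_neg hw2 hproper
  refine ⟨⟨hw, hw2⟩, fun hzero => ?_, fun m hm => ?_⟩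
  · have horigin_le := hzero.2 q hq
    rw [dotR_zero_right] at horigin_le
    linarith
  · linarith [hm.2 ⟨q, hq, rfl⟩]
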